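/- Let x₁, …, x_N be i.i.d. random variables with values in ℝ such that P(x_i² < N^{−51/50}) ≤ C₀ N^{−1/100} for a constant C₀. Then P(‖x‖ < N^{−1/40}) ≤ N^{(101/100) N^{49/50}} e^{1/C₀} C₀^N N^{−N/100}; in particular P(‖x‖ < N^{−1/40}) = o(C^{−N}) for every constant C > 0. -/

import Mathlib

/-!
If `‖x‖ < N^(-1/40)`, then `‖x‖² < N^(-1/20) = N^(97/100) · N^(-51/50)`, so fewer than
`N^(49/50)` coordinates satisfy `xᵢ² ≥ N^(-51/50)`: at least `N - k` of the independent events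
`{xᵢ² < N^(-51/50)}` occur, where `k = ⌊N^(49/50)⌋`. A union bound over the index sets of size
`N - k` bounds this by `C(N, k) (C₀ N^(-1/100))^(N-k)`, and `C(N, k) ≤ N^k / k!` together with
`(1/C₀)^k / k! ≤ e^(1/C₀)` gives the stated bound. Its factor `N^(-N/100)` beats every
exponential `C^N`, while `N^((101/100) N^(49/50))` is only `exp(o(N log N))`.
-/

open MeasureTheory ProbabilityTheory Filter Finset Topology
open scoped Nat

namespace ProbabilityTheory

variable {Ω ι : Type*} [Fintype ι] {m : ι → MeasurableSpace Ω} {mΩ : MeasurableSpace Ω}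
  {μ : Measure Ω}

theorem iIndep.measureReal_le_card_filter_mem_le_choose_mul_pow (hμ : iIndep m μ)
    {A : ι → Set Ω} [∀ ω, DecidablePred fun i => ω ∈ A i] (hA : ∀ i, MeasurableSet[m i] (A i))
    {p : ℝ} (hp : ∀ i, μ.real (A i) ≤ p) (k : ℕ) :
    μ.real {ω | k ≤ #{i | ω ∈ A i}} ≤ (Fintype.card ι).choose k * p ^ k := by
  have := hμ.isProbabilityMeasure
  have hcover : {ω | k ≤ #{i | ω ∈ A i}} ⊆ ⋃ S ∈ powersetCard k univ, ⋂ i ∈ S, A i := by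
    intro ω hω
    obtain ⟨S, hS, hSk⟩ := exists_subset_card_eq hω
    simp only [Set.mem_iUnion, Set.mem_iInter, mem_powersetCard]
    exact ⟨S, ⟨subset_univ S, hSk⟩, fun i hi => (mem_filter.mp (hS hi)).2⟩
  have hinter (S : Finset ι) (hS : S ∈ powersetCard k univ) : μ.real (⋂ i ∈ S, A i) ≤ p ^ k := by
    rw [measureReal_def, hμ.meas_biInter fun i _ => hA i, ENNReal.toReal_prod,
      ← (mem_powersetCard.mp hS).2, ← prod_const]
    exact prod_le_prod (fun i _ => ENNReal.toReal_nonneg) fun i _ => hp i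
  calc μ.real {ω | k ≤ #{i | ω ∈ A i}}
      ≤ ∑ S ∈ powersetCard k univ, μ.real (⋂ i ∈ S, A i) :=
        (measureReal_mono hcover (measure_ne_top _ _)).trans (measureReal_biUnion_finset_le _ _)
    _ ≤ ∑ S ∈ powersetCard k univ, p ^ k := sum_le_sum hinter
    _ = (Fintype.card ι).choose k * p ^ k := by
        rw [sum_const, card_powersetCard, card_univ, nsmul_eq_mul]

end ProbabilityTheory

theorem Finset.card_filter_le_mul_le_sum {ι : Type*} [Fintype ι] {f : ι → ℝ} (hf : 0 ≤ f)
    (t : ℝ) : #{i | t ≤ f i} * t ≤ ∑ i, f i := by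
  calc #{i | t ≤ f i} * t = #{i | t ≤ f i} • t := (nsmul_eq_mul _ _).symm
    _ ≤ ∑ i ∈ {i | t ≤ f i}, f i := card_nsmul_le_sum _ _ _ fun i hi => (mem_filter.mp hi).2
    _ ≤ ∑ i, f i := sum_le_sum_of_subset_of_nonneg (subset_univ _) fun i _ _ => hf i

theorem sub_floor_rpow_le_card_filter_sq_lt {N : ℕ} (hN : 0 < N) {v : Fin N → ℝ}
    (hv : √(∑ i, v i ^ 2) < (N : ℝ) ^ (-(1 / 40) : ℝ)) :
    N - ⌊(N : ℝ) ^ ((49 : ℝ) / 50)⌋₊ ≤ #{i | v i ^ 2 < (N : ℝ) ^ (-(51 / 50) : ℝ)} := by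
  have hNpos : (0 : ℝ) < N := Nat.cast_pos.mpr hN
  have hN1 : (1 : ℝ) ≤ N := Nat.one_le_cast.mpr hN
  have hsum : ∑ i, v i ^ 2 < (N : ℝ) ^ (97 / 100 : ℝ) * (N : ℝ) ^ (-(51 / 50) : ℝ) := by
    rw [← Real.rpow_add hNpos]
    calc ∑ i, v i ^ 2 < ((N : ℝ) ^ (-(1 / 40) : ℝ)) ^ 2 := (Real.sqrt_lt' (by positivity)).mp hv
      _ = (N : ℝ) ^ (97 / 100 + -(51 / 50) : ℝ) := by
        rw [← Real.rpow_natCast, ← Real.rpow_mul hNpos.le]; norm_num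
  have hlarge : (#{i | (N : ℝ) ^ (-(51 / 50) : ℝ) ≤ v i ^ 2} : ℝ) < (N : ℝ) ^ ((49 : ℝ) / 50) :=
    calc _ < (N : ℝ) ^ (97 / 100 : ℝ) := lt_of_mul_lt_mul_right
          ((card_filter_le_mul_le_sum (fun i => sq_nonneg (v i)) _).trans_lt hsum) (by positivity)
      _ ≤ _ := Real.rpow_le_rpow_of_exponent_le hN1 (by norm_num)
  have hsplit := card_filter_add_card_filter_not (s := univ)
    fun i => v i ^ 2 < (N : ℝ) ^ (-(51 / 50) : ℝ)
  simp only [not_lt, card_univ, Fintype.card_fin] at hsplit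
  have hfloor := Nat.le_floor hlarge.le
  omega

theorem tendsto_rpow_mul_pow_mul_rpow_neg_nhds_zero {a ε : ℝ} (ha : a < 1) (hε : 0 < ε) (c : ℝ)
    {D : ℝ} (hD : 0 ≤ D) :
    Tendsto (fun N : ℕ => (N : ℝ) ^ (c * (N : ℝ) ^ a) * D ^ N * (N : ℝ) ^ (-ε * N))
      atTop (𝓝 0) := by
  have hsmall : ∀ᶠ y : ℝ in atTop, c * y ^ (a - 1) < ε / 2 := by
    have := (tendsto_rpow_neg_atTop (y := 1 - a) (by linarith)).const_mul c
    rw [mul_zero] at this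
    simpa using this.eventually (gt_mem_nhds (half_pos hε))
  have hhalf : ∀ᶠ y : ℝ in atTop, D * y ^ (-(ε / 2)) < 1 / 2 := by
    have := (tendsto_rpow_neg_atTop (half_pos hε)).const_mul D
    rw [mul_zero] at this
    exact this.eventually (gt_mem_nhds one_half_pos)
  refine squeeze_zero' (Eventually.of_forall fun N => by positivity) ?_
    (tendsto_pow_atTop_nhds_zero_of_lt_one one_half_pos.le one_half_lt_one)
  filter_upwards [tendsto_natCast_atTop_atTop.eventually (hsmall.and (hhalf.and
    (eventually_ge_atTop 1)))] with N ⟨hcN, hDN, hN1⟩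
  have hNpos : (0 : ℝ) < N := by linarith
  have hexp : c * (N : ℝ) ^ a + -ε * N ≤ -(ε / 2) * N := by
    have hrpow : c * (N : ℝ) ^ a = c * (N : ℝ) ^ (a - 1) * N := by
      rw [mul_assoc, Real.rpow_sub_one hNpos.ne', div_mul_cancel₀ _ hNpos.ne']
    nlinarith
  calc (N : ℝ) ^ (c * (N : ℝ) ^ a) * D ^ N * (N : ℝ) ^ (-ε * N)
      = D ^ N * (N : ℝ) ^ (c * (N : ℝ) ^ a + -ε * N) := by
        rw [Real.rpow_add hNpos]; ring
    _ ≤ D ^ N * ((N : ℝ) ^ (-(ε / 2))) ^ N := by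
        rw [← Real.rpow_natCast ((N : ℝ) ^ (-(ε / 2))) N, ← Real.rpow_mul hNpos.le]
        gcongr
    _ = (D * (N : ℝ) ^ (-(ε / 2))) ^ N := (mul_pow _ _ _).symm
    _ ≤ (1 / 2) ^ N := by gcongr

theorem choose_sub_mul_pow_le {N k : ℕ} (hN : 0 < N) (hk : k ≤ N) {C₀ : ℝ} (hC₀ : 0 < C₀)
    (ε : ℝ) :
    (N.choose (N - k) : ℝ) * (C₀ * (N : ℝ) ^ (-ε)) ^ (N - k)
      ≤ (N : ℝ) ^ ((1 + ε) * k) * Real.exp (1 / C₀) * C₀ ^ N * (N : ℝ) ^ (-ε * N) := by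
  obtain ⟨n, rfl⟩ := Nat.exists_eq_add_of_le' hk
  rw [Nat.add_sub_cancel, Nat.choose_symm_add]
  set M : ℝ := ↑(n + k) with hM
  have hMpos : 0 < M := Nat.cast_pos.mpr hN
  have hexp : M ^ ((1 + ε) * k) * M ^ (-ε * M) = M ^ k * M ^ (-ε * n) := by
    rw [← Real.rpow_add hMpos, ← Real.rpow_natCast, ← Real.rpow_add hMpos, hM]
    push_cast; ring_nf
  have hC : (1 / C₀) ^ k * C₀ ^ (n + k) = C₀ ^ n := by
    rw [pow_add, div_pow, one_pow]; field_simp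
  calc ((n + k).choose k : ℝ) * (C₀ * M ^ (-ε)) ^ n
      ≤ M ^ k / k ! * (C₀ * M ^ (-ε)) ^ n := by
        gcongr
        exact Nat.choose_le_pow_div k (n + k)
    _ = M ^ ((1 + ε) * k) * ((1 / C₀) ^ k / k !) * C₀ ^ (n + k) * M ^ (-ε * M) := by
        rw [mul_pow, ← Real.rpow_natCast (M ^ (-ε)), ← Real.rpow_mul hMpos.le, ← hC]
        linear_combination (-((1 / C₀) ^ k * C₀ ^ (n + k) / k !)) * hexp
    _ ≤ _ := by
        gcongr
        exact Real.pow_div_factorial_le_exp _ (by positivity) k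

theorem measureReal_sqrt_sum_sq_lt_le {Ω : Type*} [MeasurableSpace Ω] {μ : Measure Ω} {N : ℕ}
    (hN : 0 < N) {x : Fin N → Ω → ℝ} (hindep : iIndepFun x μ) {C₀ : ℝ} (hC₀ : 0 < C₀)
    (htail : ∀ i, μ.real {ω | x i ω ^ 2 < (N : ℝ) ^ (-(51 / 50) : ℝ)}
      ≤ C₀ * (N : ℝ) ^ (-(1 / 100) : ℝ)) :
    μ.real {ω | √(∑ i, x i ω ^ 2) < (N : ℝ) ^ (-(1 / 40) : ℝ)}
      ≤ (N : ℝ) ^ ((101 / 100) * (N : ℝ) ^ ((49 : ℝ) / 50)) * Real.exp (1 / C₀) *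
          C₀ ^ N * (N : ℝ) ^ (-(N : ℝ) / 100) := by
  have := hindep.isProbabilityMeasure
  have hN1 : (1 : ℝ) ≤ N := Nat.one_le_cast.mpr hN
  set k := ⌊(N : ℝ) ^ ((49 : ℝ) / 50)⌋₊
  have hkN : k ≤ N := Nat.floor_le_of_le <|
    (Real.rpow_le_rpow_of_exponent_le hN1 (by norm_num : (49 : ℝ) / 50 ≤ 1)).trans_eq
      (Real.rpow_one _)
  have hmeas (i : Fin N) :
      MeasurableSet[.comap (x i) inferInstance] {ω | x i ω ^ 2 < (N : ℝ) ^ (-(51 / 50) : ℝ)} :=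
    ⟨{y | y ^ 2 < _}, measurableSet_lt (by fun_prop) measurable_const, rfl⟩
  calc μ.real {ω | √(∑ i, x i ω ^ 2) < (N : ℝ) ^ (-(1 / 40) : ℝ)}
      ≤ μ.real {ω | N - k ≤ #{i | x i ω ^ 2 < (N : ℝ) ^ (-(51 / 50) : ℝ)}} :=
        measureReal_mono (fun ω => sub_floor_rpow_le_card_filter_sq_lt hN) (measure_ne_top _ _)
    _ ≤ N.choose (N - k) * (C₀ * (N : ℝ) ^ (-(1 / 100) : ℝ)) ^ (N - k) := by
        simpa using hindep.iIndep.measureReal_le_card_filter_mem_le_choose_mul_pow hmeas htail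
          (N - k)
    _ ≤ (N : ℝ) ^ ((1 + 1 / 100 : ℝ) * k) * Real.exp (1 / C₀) * C₀ ^ N *
          (N : ℝ) ^ (-(1 / 100) * (N : ℝ)) :=
        choose_sub_mul_pow_le hN hkN hC₀ _
    _ ≤ _ := by
        rw [show -(N : ℝ) / 100 = -(1 / 100) * N by ring]
        gcongr
        · norm_num
        · exact Nat.floor_le (by positivity)

theorem stmt5_general
    {Ω : ℕ → Type*} [∀ N, MeasurableSpace (Ω N)]
    (μ : ∀ N, Measure (Ω N))
    (x : ∀ N, Fin N → Ω N → ℝ)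
    (hindep : ∀ N, iIndepFun (x N) (μ N))
    (C₀ : ℝ) (hC₀ : 0 < C₀)
    (htail : ∀ N (i : Fin N),
      ((μ N) {ω | (x N i ω) ^ 2 < (N : ℝ) ^ (-(51 / 50) : ℝ)}).toReal
        ≤ C₀ * (N : ℝ) ^ (-(1 / 100) : ℝ)) :
    (∀ N : ℕ, 1 ≤ N →
      ((μ N) {ω | Real.sqrt (∑ i, (x N i ω) ^ 2) < (N : ℝ) ^ (-(1 / 40) : ℝ)}).toReal
        ≤ (N : ℝ) ^ ((101 / 100) * (N : ℝ) ^ ((49 : ℝ) / 50)) * Real.exp (1 / C₀) *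
            C₀ ^ N * (N : ℝ) ^ (-(N : ℝ) / 100)) ∧
    ∀ C : ℝ, 0 < C →
      Tendsto (fun N =>
        ((μ N) {ω | Real.sqrt (∑ i, (x N i ω) ^ 2) < (N : ℝ) ^ (-(1 / 40) : ℝ)}).toReal * C ^ N)
        atTop (nhds 0) := by
  have hbound (N : ℕ) (hN : 1 ≤ N) := measureReal_sqrt_sum_sq_lt_le hN (hindep N) hC₀ (htail N)
  refine ⟨hbound, fun C hC => squeeze_zero' (Eventually.of_forall fun N => by positivity)
    ((eventually_ge_atTop 1).mono fun N hN =>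
      mul_le_mul_of_nonneg_right (hbound N hN) (pow_nonneg hC.le N)) ?_⟩
  have hlim := (tendsto_rpow_mul_pow_mul_rpow_neg_nhds_zero (a := 49 / 50) (ε := 1 / 100)
    (by norm_num) (by norm_num) (101 / 100) (mul_pos hC₀ hC).le).const_mul (Real.exp (1 / C₀))
  rw [mul_zero] at hlim
  refine hlim.congr fun N => ?_
  rw [mul_pow, show -(N : ℝ) / 100 = -(1 / 100) * N by ring]
  ring

/-- lower bound on the norm of an i.i.d. vector with small atoms near zero. -/
theorem stmt5
    {Ω : ℕ → Type*} [∀ N, MeasurableSpace (Ω N)]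
    (μ : ∀ N, Measure (Ω N)) [∀ N, IsProbabilityMeasure (μ N)]
    (x : ∀ N, Fin N → Ω N → ℝ)
    (hmeas : ∀ N i, Measurable (x N i))
    (hindep : ∀ N, iIndepFun (x N) (μ N))
    (hident : ∀ N (i j : Fin N), (μ N).map (x N i) = (μ N).map (x N j))
    (C₀ : ℝ) (hC₀ : 0 < C₀)
    (htail : ∀ N (i : Fin N),
      ((μ N) {ω | (x N i ω) ^ 2 < (N : ℝ) ^ (-(51 / 50) : ℝ)}).toReal
        ≤ C₀ * (N : ℝ) ^ (-(1 / 100) : ℝ)) :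
    (∀ N : ℕ, 1 ≤ N →
      ((μ N) {ω | Real.sqrt (∑ i, (x N i ω) ^ 2) < (N : ℝ) ^ (-(1 / 40) : ℝ)}).toReal
        ≤ (N : ℝ) ^ ((101 / 100) * (N : ℝ) ^ ((49 : ℝ) / 50)) * Real.exp (1 / C₀) *
            C₀ ^ N * (N : ℝ) ^ (-(N : ℝ) / 100)) ∧
    ∀ C : ℝ, 0 < C →
      Tendsto (fun N =>
        ((μ N) {ω | Real.sqrt (∑ i, (x N i ω) ^ 2) < (N : ℝ) ^ (-(1 / 40) : ℝ)}).toReal * C ^ N)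
        atTop (nhds 0) :=
  stmt5_general μ x hindep C₀ hC₀ htail
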